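/- If f_1(n) := Σ_{k≥0} a(n,k)·a(n, k - 2^n), then f_1(n) = f_0(n-1) + 2 f_1(n-1) for all n ≥ 1, where f_0(n) := Σ_{k≥0} a(n,k)^2. -/

import Mathlib

open Polynomial

noncomputable def F (n : ℕ) : Polynomial ℤ :=
  ∏ i ∈ Finset.range n, (1 + X ^ (2 ^ i) + X ^ (2 ^ (i + 1)))

noncomputable def a (n : ℕ) (k : ℤ) : ℤ :=
  if 0 ≤ k then (F n).coeff k.toNat else 0

noncomputable def f0 (n : ℕ) : ℤ := ∑ᶠ k : ℕ, (a n k) ^ 2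

noncomputable def f1 (n : ℕ) : ℤ := ∑ᶠ k : ℕ, a n k * a n ((k : ℤ) - 2 ^ n)

/-!
Since `F (n + 1) = F n · (1 + X ^ 2ⁿ + X ^ 2ⁿ⁺¹)`, the coefficient sequence of `F (n + 1)` is the sum
of three shifts of that of `F n` by `0`, `2ⁿ` and `2 · 2ⁿ`. Hence the correlation of `a (n + 1)` at
shift `2 · 2ⁿ` is a sum of nine correlations of `a n` at shifts `c · 2ⁿ`, `c ∈ {0, …, 4}`, with
multiplicities `1, 2, 3, 2, 1`. As `a n` is supported on `[0, 2ⁿ⁺¹ - 2]`, only `c = 0` and `c = 1`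
survive.
-/

open Finset

lemma finsum_natCast_eq {M : Type*} [AddCommMonoid M] (g : ℤ → M) (hg : ∀ k < 0, g k = 0) :
    ∑ᶠ k : ℕ, g k = ∑ᶠ k : ℤ, g k := by
  rw [← finsum_mem_range Nat.cast_injective, finsum_mem_def, Set.indicator_eq_self.2]
  intro k hk
  exact ⟨k.toNat, Int.toNat_of_nonneg (not_lt.1 fun h => hk (hg k h))⟩

lemma a_of_neg {n : ℕ} {k : ℤ} (hk : k < 0) : a n k = 0 := by
  simp [a, not_le.2 hk]

lemma coeff_F_mul_X_pow (n m : ℕ) {k : ℤ} (hk : 0 ≤ k) :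
    (F n * X ^ m).coeff k.toNat = a n (k - m) := by
  rw [coeff_mul_X_pow', a]
  split_ifs <;> first | omega | congr 1; omega

lemma F_succ (n : ℕ) : F (n + 1) = ∑ i ∈ range 3, F n * X ^ (i * 2 ^ n) := by
  simp only [F, prod_range_succ, sum_range_succ, sum_range_zero, pow_succ, pow_mul]
  ring

lemma a_succ (n : ℕ) (k : ℤ) : a (n + 1) k = ∑ i ∈ range 3, a n (k - i * 2 ^ n) := by
  by_cases hk : 0 ≤ k
  · rw [a, if_pos hk, F_succ, finsetSum_coeff]
    refine sum_congr rfl fun i _ => ?_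
    rw [coeff_F_mul_X_pow n _ hk]
    push_cast; rfl
  · rw [a_of_neg (not_le.1 hk)]
    refine (sum_eq_zero fun i _ => a_of_neg ?_).symm
    have : (0 : ℤ) ≤ i * 2 ^ n := by positivity
    omega

lemma a_of_le {n : ℕ} {k : ℤ} (hk : 2 ^ (n + 1) - 1 ≤ k) : a n k = 0 := by
  induction n generalizing k with
  | zero =>
    rw [a, if_pos (by omega), F, prod_range_zero, coeff_one, if_neg (by omega)]
  | succ n ih =>
    rw [a_succ]
    refine sum_eq_zero fun i hmem => ih ?_
    have hi : (i : ℤ) ≤ 2 := by simp only [mem_range] at hmem; omega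
    have : (i : ℤ) * 2 ^ n ≤ 2 * 2 ^ n := by gcongr
    rw [pow_succ, pow_succ] at hk
    rw [pow_succ]
    linarith

lemma hasFiniteSupport_a (n : ℕ) : (a n).HasFiniteSupport :=
  (Set.finite_Ico (0 : ℤ) (2 ^ (n + 1) - 1)).subset fun k hk => by
    by_contra h
    rw [Set.mem_Ico, not_and_or, not_le, not_lt] at h
    exact hk (h.elim a_of_neg a_of_le)

noncomputable def corr (n : ℕ) (d : ℤ) : ℤ := ∑ᶠ k : ℤ, a n k * a n (k - d)

lemma finsum_a_sub_mul_a_sub (n : ℕ) (u v : ℤ) :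
    ∑ᶠ k : ℤ, a n (k - u) * a n (k - v) = corr n (v - u) := by
  rw [corr, ← finsum_comp_equiv (Equiv.subRight u) (f := fun k => a n k * a n (k - (v - u)))]
  simp only [Equiv.subRight_apply, sub_sub_sub_cancel_right]

lemma corr_succ (n : ℕ) (d : ℤ) :
    corr (n + 1) d = ∑ i ∈ range 3, ∑ j ∈ range 3, corr n (d + (j - i) * 2 ^ n) := by
  have hfin (u v : ℤ) : (fun k => a n (k - u) * a n (k - v)).HasFiniteSupport :=
    ((hasFiniteSupport_a n).comp_of_injective (sub_left_injective (b := u))).mul_left _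
  simp only [corr, a_succ, sub_sub, sum_mul_sum]
  rw [finsum_sum_comm _ _ fun i _ => .sum (fun j => hfin _ _) _]
  refine sum_congr rfl fun i _ => ?_
  rw [finsum_sum_comm _ _ fun j _ => hfin _ _]
  refine sum_congr rfl fun j _ => ?_
  rw [finsum_a_sub_mul_a_sub]
  congr 1
  ring

lemma corr_of_le {n : ℕ} {d : ℤ} (hd : 2 ^ (n + 1) - 1 ≤ d) : corr n d = 0 := by
  refine finsum_eq_zero_of_forall_eq_zero fun k => ?_
  by_cases hk : k < 2 ^ (n + 1) - 1
  · rw [a_of_neg (k := k - d) (by omega), mul_zero]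
  · rw [a_of_le (not_lt.1 hk), zero_mul]

lemma f0_eq_corr (n : ℕ) : f0 n = corr n 0 := by
  rw [f0, corr, finsum_natCast_eq (fun k => a n k ^ 2)
    fun k hk => by rw [a_of_neg hk, zero_pow two_ne_zero]]
  simp only [sub_zero, sq]

lemma f1_eq_corr (n : ℕ) : f1 n = corr n (2 ^ n) := by
  rw [f1, corr, finsum_natCast_eq (fun k => a n k * a n (k - 2 ^ n))
    fun k hk => by rw [a_of_neg hk, zero_mul]]

theorem f1_recurrence (n : ℕ) (hn : 1 ≤ n) :
    f1 n = f0 (n - 1) + 2 * f1 (n - 1) := by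
  obtain ⟨m, rfl⟩ := Nat.exists_eq_add_of_le' hn
  have hvanish (c : ℤ) (hc : 2 ≤ c) : corr m (c * 2 ^ m) = 0 := by
    refine corr_of_le ?_
    have : (2 : ℤ) * 2 ^ m ≤ c * 2 ^ m := by gcongr
    rw [pow_succ]
    linarith
  rw [Nat.add_sub_cancel, f1_eq_corr, f0_eq_corr, f1_eq_corr, pow_succ', corr_succ]
  simp only [sum_range_succ, sum_range_zero, ← add_mul, Nat.cast_zero, Nat.cast_one, Nat.cast_ofNat]
  norm_num
  rw [hvanish 2 le_rfl, hvanish 3 (by norm_num), hvanish 4 (by norm_num)]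
  ring
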